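/- arXiv:2305.06197 — 6 statements merged into one kernel-verified Lean document; each statement's English description precedes it below -/
import Mathlib

section
/- Let X0 and X1 be real n×m matrices. There exists a real n×n matrix A such that X1 = A·X0 if and only if X0 and X1 are linearly consistent, i.e., for every vector c ∈ ℝ^m, X0·c = 0 implies X1·c = 0. -/
open Matrix

/-- There exists a real `n × n` matrix `A` with `X1 = A * X0` if and only if
`X0` and `X1` are linearly consistent, i.e. every `c` in the kernel of `X0` is in the
kernel of `X1`. -/
theorem dmd_exists_linear_operator_iff_linearly_consistent
    (n m : ℕ) (X0 X1 : Matrix (Fin n) (Fin m) ℝ) :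
    (∃ A : Matrix (Fin n) (Fin n) ℝ, X1 = A * X0) ↔
      (∀ c : Fin m → ℝ, X0 *ᵥ c = 0 → X1 *ᵥ c = 0) := by
  constructor
  · rintro ⟨A, rfl⟩ c hc
    rw [← Matrix.mulVec_mulVec, hc, Matrix.mulVec_zero]
  · intro hcons
    set f := X0.mulVecLin with hf
    set h := X1.mulVecLin with hh
    have hk : LinearMap.ker f ≤ LinearMap.ker h := by
      intro c hc
      exact LinearMap.mem_ker.mpr (hcons c (LinearMap.mem_ker.mp hc))
    let q : ((Fin m → ℝ) ⧸ LinearMap.ker f) →ₗ[ℝ] (Fin n → ℝ) :=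
      (LinearMap.ker f).liftQ h hk
    let e := f.quotKerEquivRange
    let g0 : LinearMap.range f →ₗ[ℝ] (Fin n → ℝ) := q ∘ₗ (e.symm : _ →ₗ[ℝ] _)
    obtain ⟨G, hG⟩ := g0.exists_extend
    refine ⟨LinearMap.toMatrix' G, ?_⟩
    have key : h = G ∘ₗ f := by
      refine LinearMap.ext fun x => ?_
      have hx : f x ∈ LinearMap.range f := LinearMap.mem_range_self f x
      have h1 : (⟨f x, hx⟩ : LinearMap.range f) = e (Submodule.Quotient.mk x) := rfl
      have h2 : G (f x) = g0 ⟨f x, hx⟩ := by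
        have := congrArg (fun g => g (⟨f x, hx⟩ : LinearMap.range f)) hG
        simpa using this
      simp only [LinearMap.comp_apply, h2, h1, g0]
      simp [q, e]
    have hX1 : X1 = LinearMap.toMatrix' h := by
      rw [hh, ← Matrix.toLin'_apply' X1, LinearMap.toMatrix'_toLin']
    have hX0 : X0 = LinearMap.toMatrix' f := by
      rw [hf, ← Matrix.toLin'_apply' X0, LinearMap.toMatrix'_toLin']
    rw [hX1, hX0, key, LinearMap.toMatrix'_comp]
end

section
/- Let X0, X1 be real n×m matrices such that X0·X0ᵀ is invertible. Then A := X1·X0ᵀ·(X0·X0ᵀ)⁻¹ is the unique minimizer of ‖X1 − Ã·X0‖_F over all real n×n matrices Ã. -/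
open Matrix

/-- The Frobenius norm of a real matrix: the square root of the sum of the squares
of its entries. -/
noncomputable def frobNorm {n m : ℕ} (M : Matrix (Fin n) (Fin m) ℝ) : ℝ :=
  Real.sqrt (∑ i, ∑ j, (M i j) ^ 2)

/-- If `X0 * X0ᵀ` is invertible, then `A = X1 * X0ᵀ * (X0 * X0ᵀ)⁻¹` is the
unique minimizer of `‖X1 − Ã·X0‖_F` over all real `n × n` matrices `Ã`. -/
theorem dmd_full_rank_unique_minimizer
    (n m : ℕ) (X0 X1 : Matrix (Fin n) (Fin m) ℝ)
    (hinv : IsUnit (X0 * X0ᵀ)) :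
    (∀ B : Matrix (Fin n) (Fin n) ℝ,
        frobNorm (X1 - (X1 * X0ᵀ * (X0 * X0ᵀ)⁻¹) * X0) ≤ frobNorm (X1 - B * X0)) ∧
      (∀ B : Matrix (Fin n) (Fin n) ℝ,
        (∀ C : Matrix (Fin n) (Fin n) ℝ,
            frobNorm (X1 - B * X0) ≤ frobNorm (X1 - C * X0)) →
          B = X1 * X0ᵀ * (X0 * X0ᵀ)⁻¹) := by
  have hdet : IsUnit (X0 * X0ᵀ).det := (Matrix.isUnit_iff_isUnit_det _).mp hinv
  set A : Matrix (Fin n) (Fin n) ℝ := X1 * X0ᵀ * (X0 * X0ᵀ)⁻¹ with hA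
  set P : Matrix (Fin n) (Fin m) ℝ := X1 - A * X0 with hP
  -- normal equation: P * X0ᵀ = 0
  have hnorm : P * X0ᵀ = 0 := by
    have h1 : A * X0 * X0ᵀ = X1 * X0ᵀ := by
      rw [hA, Matrix.mul_assoc (X1 * X0ᵀ * (X0 * X0ᵀ)⁻¹) X0 X0ᵀ,
        Matrix.mul_assoc (X1 * X0ᵀ) (X0 * X0ᵀ)⁻¹ (X0 * X0ᵀ),
        Matrix.nonsing_inv_mul _ hdet, Matrix.mul_one]
    rw [hP, Matrix.sub_mul, h1, sub_self]
  have h0 : ∀ i k, (∑ j, P i j * X0 k j) = 0 := by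
    intro i k
    have := congrFun (congrFun hnorm i) k
    simpa [Matrix.mul_apply, Matrix.transpose_apply] using this
  -- cross term vanishes
  have cross : ∀ D : Matrix (Fin n) (Fin n) ℝ,
      (∑ i, ∑ j, P i j * (D * X0) i j) = 0 := by
    intro D
    refine Finset.sum_eq_zero fun i _ => ?_
    have : (∑ j, P i j * (D * X0) i j) = ∑ k, D i k * (∑ j, P i j * X0 k j) := by
      simp only [Matrix.mul_apply, Finset.mul_sum]
      rw [Finset.sum_comm]
      exact Finset.sum_congr rfl fun k _ => Finset.sum_congr rfl fun j _ => by ring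
    rw [this]
    simp [h0]
  -- Pythagorean identity
  have key : ∀ D : Matrix (Fin n) (Fin n) ℝ,
      (∑ i, ∑ j, ((P + D * X0) i j) ^ 2)
        = (∑ i, ∑ j, (P i j) ^ 2) + ∑ i, ∑ j, ((D * X0) i j) ^ 2 := by
    intro D
    have expand : ∀ i j, ((P + D * X0) i j) ^ 2
        = (P i j) ^ 2 + ((D * X0) i j) ^ 2 + 2 * (P i j * (D * X0) i j) := by
      intro i j; simp [Matrix.add_apply]; ring
    calc (∑ i, ∑ j, ((P + D * X0) i j) ^ 2)
        = ∑ i, ∑ j, ((P i j) ^ 2 + ((D * X0) i j) ^ 2 + 2 * (P i j * (D * X0) i j)) := by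
          exact Finset.sum_congr rfl fun i _ => Finset.sum_congr rfl fun j _ => expand i j
      _ = (∑ i, ∑ j, (P i j) ^ 2) + (∑ i, ∑ j, ((D * X0) i j) ^ 2)
            + 2 * (∑ i, ∑ j, P i j * (D * X0) i j) := by
          simp only [Finset.sum_add_distrib, Finset.mul_sum]
      _ = (∑ i, ∑ j, (P i j) ^ 2) + ∑ i, ∑ j, ((D * X0) i j) ^ 2 := by
          rw [cross D]; ring
  have hdecomp : ∀ B : Matrix (Fin n) (Fin n) ℝ, X1 - B * X0 = P + (A - B) * X0 := by
    intro B
    rw [hP, Matrix.sub_mul]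
    abel
  have hsq : ∀ B : Matrix (Fin n) (Fin n) ℝ,
      (∑ i, ∑ j, ((X1 - B * X0) i j) ^ 2)
        = (∑ i, ∑ j, (P i j) ^ 2) + ∑ i, ∑ j, (((A - B) * X0) i j) ^ 2 := by
    intro B
    rw [hdecomp B]
    exact key (A - B)
  have hnonneg : ∀ (M : Matrix (Fin n) (Fin m) ℝ), (0:ℝ) ≤ ∑ i, ∑ j, (M i j) ^ 2 := by
    intro M; positivity
  constructor
  · intro B
    rw [frobNorm, frobNorm]
    apply Real.sqrt_le_sqrt
    rw [hsq B]
    have := hnonneg ((A - B) * X0)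
    linarith
  · intro B hB
    have h1 : frobNorm (X1 - B * X0) ≤ frobNorm (X1 - A * X0) := hB A
    have h2 : (∑ i, ∑ j, ((X1 - B * X0) i j) ^ 2) ≤ ∑ i, ∑ j, ((X1 - A * X0) i j) ^ 2 := by
      have := (Real.sqrt_le_sqrt_iff (hnonneg _)).mp (by simpa [frobNorm] using h1)
      exact this
    have hPA : (X1 - A * X0) = P := by rw [hP]
    rw [hsq B, hPA] at h2
    have hz : (∑ i, ∑ j, (((A - B) * X0) i j) ^ 2) = 0 := by
      have := hnonneg ((A - B) * X0)
      linarith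
    have hzero : (A - B) * X0 = 0 := by
      ext i j
      have hij : (((A - B) * X0) i j) ^ 2 = 0 := by
        have h' := (Finset.sum_eq_zero_iff_of_nonneg
          (fun i _ => Finset.sum_nonneg fun j _ => sq_nonneg _)).mp hz i (Finset.mem_univ i)
        exact (Finset.sum_eq_zero_iff_of_nonneg
          (fun j _ => sq_nonneg _)).mp h' j (Finset.mem_univ j)
      simpa using pow_eq_zero_iff (n := 2) (by norm_num) |>.mp hij
    have : (A - B) * (X0 * X0ᵀ) = 0 := by
      rw [← Matrix.mul_assoc, hzero, Matrix.zero_mul]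
    have hAB : A - B = 0 := by
      have h3 := congrArg (· * (X0 * X0ᵀ)⁻¹) this
      simpa [Matrix.mul_assoc, Matrix.mul_nonsing_inv _ hdet] using h3
    have := sub_eq_zero.mp hAB
    rw [← this, hA]
end

section
/- Let X0, X1 be real n×m matrices that are linearly consistent, i.e., X0·c = 0 implies X1·c = 0 for every c ∈ ℝ^m, and let A be a real n×n matrix satisfying the normal equation A·X0·X0ᵀ = X1·X0ᵀ. Then X1 = A·X0 exactly. -/
open Matrix

/-- If `X0`, `X1` are linearly consistent and `A` satisfies the normal
equation `A * X0 * X0ᵀ = X1 * X0ᵀ`, then `X1 = A * X0` exactly. -/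
theorem dmd_linearly_consistent_exact_fit
    (n m : ℕ) (X0 X1 : Matrix (Fin n) (Fin m) ℝ) (A : Matrix (Fin n) (Fin n) ℝ)
    (hconsistent : ∀ c : Fin m → ℝ, X0 *ᵥ c = 0 → X1 *ᵥ c = 0)
    (hA : A * X0 * X0ᵀ = X1 * X0ᵀ) :
    X1 = A * X0 := by
  set B := X1 - A * X0 with hBdef
  have hB : B * X0ᵀ = 0 := by
    rw [hBdef, Matrix.sub_mul, hA, sub_self]
  have hX0B : X0 * Bᵀ = 0 := by
    have := congrArg Matrix.transpose hB
    simpa [Matrix.transpose_mul] using this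
  have hX1B : X1 * Bᵀ = 0 := by
    ext i j
    have hc : X0 *ᵥ (fun k => Bᵀ k j) = 0 := by
      funext i'
      have := congrFun (congrFun hX0B i') j
      simpa [Matrix.mul_apply, Matrix.mulVec, dotProduct] using this
    have := congrFun (hconsistent _ hc) i
    simpa [Matrix.mul_apply, Matrix.mulVec, dotProduct] using this
  have hBB : B * Bᵀ = 0 := by
    rw [hBdef, Matrix.sub_mul, hX1B, Matrix.mul_assoc, hX0B, Matrix.mul_zero, sub_self]
  have hB0 : B = 0 := Matrix.self_mul_conjTranspose_eq_zero.mp (by simpa [Matrix.conjTranspose_eq_transpose_of_trivial] using hBB)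
  exact sub_eq_zero.mp hB0
end

section
/- Let X0, X1 be real n×m matrices, and suppose X0 = U·Σ·Vᵀ where U is a real n×d matrix with UᵀU = I_d, V is a real m×d matrix with VᵀV = I_d, and Σ is an invertible d×d diagonal matrix. Define A := X1·V·Σ⁻¹·Uᵀ and Â := Uᵀ·A·U. If Â·w = λ·w for some nonzero λ ∈ ℂ and w ∈ ℂ^d, then the exact DMD mode φ := (1/λ)·X1·V·Σ⁻¹·w satisfies A·φ = λ·φ; moreover, if w ≠ 0 then φ ≠ 0. -/
open Matrix

/-- Given the compact SVD `X0 = U * Σ * Vᵀ` (with `UᵀU = I`, `VᵀV = I`,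
`Σ` diagonal and invertible), let `A = X1 * V * Σ⁻¹ * Uᵀ` and `Â = Uᵀ * A * U`. If
`(λ, w)` is an eigenpair of `Â` with `λ ≠ 0`, then the exact DMD mode
`φ = (1/λ) • (X1 * V * Σ⁻¹) * w` is an eigenvector of `A` with eigenvalue `λ`, and
`φ ≠ 0` whenever `w ≠ 0`. -/
theorem exact_dmd_mode_is_eigenvector
    (n m d : ℕ) (X0 X1 : Matrix (Fin n) (Fin m) ℝ)
    (U : Matrix (Fin n) (Fin d) ℝ) (V : Matrix (Fin m) (Fin d) ℝ)
    (S : Matrix (Fin d) (Fin d) ℝ)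
    (hU : Uᵀ * U = 1) (hV : Vᵀ * V = 1) (hS : S.IsDiag) (hSinv : IsUnit S)
    (hSVD : X0 = U * S * Vᵀ)
    (A : Matrix (Fin n) (Fin n) ℝ) (hA : A = X1 * V * S⁻¹ * Uᵀ)
    (Ahat : Matrix (Fin d) (Fin d) ℝ) (hAhat : Ahat = Uᵀ * A * U)
    (lam : ℂ) (hlam : lam ≠ 0) (w : Fin d → ℂ)
    (heig : (Ahat.map (Complex.ofReal)) *ᵥ w = lam • w)
    (phi : Fin n → ℂ)
    (hphi : phi = (1 / lam) • (((X1 * V * S⁻¹).map (Complex.ofReal)) *ᵥ w)) :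
    (A.map (Complex.ofReal)) *ᵥ phi = lam • phi ∧ (w ≠ 0 → phi ≠ 0) := by
  set f : ℝ →+* ℂ := Complex.ofRealHom with hf
  set B : Matrix (Fin n) (Fin d) ℂ := (X1 * V * S⁻¹).map Complex.ofReal with hB
  set Ut : Matrix (Fin d) (Fin n) ℂ := Uᵀ.map Complex.ofReal with hUt
  have hAmap : A.map Complex.ofReal = B * Ut := by
    rw [hA, hB, hUt]
    exact Matrix.map_mul (f := f)
  have hAhatmap : Ahat.map Complex.ofReal = Ut * B := by
    have : Ahat = Uᵀ * (X1 * V * S⁻¹) := by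
      rw [hAhat, hA]
      calc Uᵀ * (X1 * V * S⁻¹ * Uᵀ) * U = Uᵀ * (X1 * V * S⁻¹) * (Uᵀ * U) := by
            simp [Matrix.mul_assoc]
        _ = Uᵀ * (X1 * V * S⁻¹) := by rw [hU, Matrix.mul_one]
    rw [this, hUt, hB]
    exact Matrix.map_mul (f := f)
  have hUtB : Ut *ᵥ (B *ᵥ w) = lam • w := by
    rw [Matrix.mulVec_mulVec, ← hAhatmap, heig]
  have hBw : B *ᵥ w = lam • phi := by
    rw [hphi, smul_smul, one_div, mul_inv_cancel₀ hlam, one_smul]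
  constructor
  · rw [hAmap, hphi, Matrix.mulVec_smul, ← Matrix.mulVec_mulVec, hUtB,
      Matrix.mulVec_smul, hBw, smul_smul, smul_smul, one_div]
    rw [smul_smul, smul_smul]; congr 1; field_simp
  · intro hw hphi0
    apply hw
    have : Ut *ᵥ (B *ᵥ w) = 0 := by
      rw [hBw, hphi0, smul_zero, Matrix.mulVec_zero]
    rw [hUtB] at this
    exact (smul_eq_zero.mp this).resolve_left hlam
end

section
/- Let Ψ0 and Ψ1 be real m×M matrices, and suppose Ψ0 = Q·Σ·Zᵀ where Q is a real m×r matrix with QᵀQ = I_r, Z is a real M×r matrix with ZᵀZ = I_r, and Σ is an invertible r×r diagonal matrix. Define K̂ := Σ⁻¹·Qᵀ·(Ψ1·Ψ0ᵀ)·Q·Σ⁻¹ and K̃ := Z·Σ⁻¹·Qᵀ·Ψ1. If K̂·v̂ = λ·v̂ for some λ ∈ ℂ and nonzero v̂ ∈ ℂ^r, then v := Z·v̂ is nonzero and satisfies K̃·v = λ·v. Hence every eigenvalue of K̂ is an eigenvalue of K̃. -/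
open Matrix

lemma map_mul_ofReal {a b c : ℕ} (A : Matrix (Fin a) (Fin b) ℝ)
    (B : Matrix (Fin b) (Fin c) ℝ) :
    (A * B).map (Complex.ofReal) = A.map Complex.ofReal * B.map Complex.ofReal := by
  ext i j
  simp [Matrix.mul_apply, Matrix.map_apply]

/-- With `Ψ0 = Q * Σ * Zᵀ` a compact SVD, `K̂ = Σ⁻¹·Qᵀ·(Ψ1·Ψ0ᵀ)·Q·Σ⁻¹`
and `K̃ = Z·Σ⁻¹·Qᵀ·Ψ1`, every eigenpair `(λ, v̂)` of `K̂` with `v̂ ≠ 0` yields the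
nonzero eigenvector `v = Z·v̂` of `K̃` with the same eigenvalue `λ`. -/
theorem kernel_dmd_eigenvalue_lift
    (m M r : ℕ) (Psi0 Psi1 : Matrix (Fin m) (Fin M) ℝ)
    (Q : Matrix (Fin m) (Fin r) ℝ) (Z : Matrix (Fin M) (Fin r) ℝ)
    (S : Matrix (Fin r) (Fin r) ℝ)
    (hQ : Qᵀ * Q = 1) (hZ : Zᵀ * Z = 1) (hS : S.IsDiag) (hSinv : IsUnit S)
    (hSVD : Psi0 = Q * S * Zᵀ)
    (Khat : Matrix (Fin r) (Fin r) ℝ)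
    (hKhat : Khat = S⁻¹ * Qᵀ * (Psi1 * Psi0ᵀ) * Q * S⁻¹)
    (Ktilde : Matrix (Fin M) (Fin M) ℝ)
    (hKtilde : Ktilde = Z * S⁻¹ * Qᵀ * Psi1)
    (lam : ℂ) (vhat : Fin r → ℂ) (hvhat : vhat ≠ 0)
    (heig : (Khat.map (Complex.ofReal)) *ᵥ vhat = lam • vhat)
    (v : Fin M → ℂ) (hv : v = (Z.map (Complex.ofReal)) *ᵥ vhat) :
    v ≠ 0 ∧ (Ktilde.map (Complex.ofReal)) *ᵥ v = lam • v := by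
  have hSS : S * S⁻¹ = 1 :=
    Matrix.mul_nonsing_inv S ((Matrix.isUnit_iff_isUnit_det S).mp hSinv)
  have hSt : Sᵀ = S := hS.isSymm
  have key : Ktilde * Z = Z * Khat := by
    subst hKtilde hKhat hSVD
    have hPsi0T : (Q * S * Zᵀ)ᵀ = Z * S * Qᵀ := by
      rw [Matrix.transpose_mul, Matrix.transpose_mul, Matrix.transpose_transpose,
        hSt, Matrix.mul_assoc]
    rw [hPsi0T]
    simp only [Matrix.mul_assoc]
    rw [show Qᵀ * (Q * S⁻¹) = S⁻¹ by rw [← Matrix.mul_assoc, hQ, Matrix.one_mul],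
      show S * S⁻¹ = 1 from hSS, Matrix.mul_one]
  have keyC : Ktilde.map Complex.ofReal * Z.map Complex.ofReal
      = Z.map Complex.ofReal * Khat.map Complex.ofReal := by
    rw [← map_mul_ofReal, ← map_mul_ofReal, key]
  have hZC : Zᵀ.map Complex.ofReal * Z.map Complex.ofReal = 1 := by
    rw [← map_mul_ofReal, hZ]
    ext i j
    simp [Matrix.map_apply, Matrix.one_apply]
    split <;> simp
  constructor
  · intro h0
    apply hvhat
    have : Zᵀ.map Complex.ofReal *ᵥ v = Zᵀ.map Complex.ofReal *ᵥ 0 := by rw [h0]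
    rw [hv, Matrix.mulVec_mulVec, hZC, Matrix.one_mulVec, Matrix.mulVec_zero] at this
    exact this
  · rw [hv, Matrix.mulVec_mulVec, keyC, ← Matrix.mulVec_mulVec, heig, Matrix.mulVec_smul]
end

section
/- Let Ψ0 and Ψ1 be real m×M matrices, and suppose Ψ0 = Q·Σ·Zᵀ where Q is a real m×r matrix with QᵀQ = I_r, Z is a real M×r matrix with ZᵀZ = I_r, and Σ is an invertible r×r diagonal matrix. Define K̂ := Σ⁻¹·Qᵀ·(Ψ1·Ψ0ᵀ)·Q·Σ⁻¹ and K̃ := Z·Σ⁻¹·Qᵀ·Ψ1. If K̃·v = λ·v for some nonzero λ ∈ ℂ and nonzero v ∈ ℂ^M, then Z·Zᵀ·v = v, the vector v̂ := Zᵀ·v is nonzero, and K̂·v̂ = λ·v̂. Hence every nonzero eigenvalue of K̃ is an eigenvalue of K̂. -/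
open Matrix

lemma kdmd_map_mul {a b c : ℕ} (X : Matrix (Fin a) (Fin b) ℝ)
    (Y : Matrix (Fin b) (Fin c) ℝ) :
    (X * Y).map Complex.ofReal = X.map Complex.ofReal * Y.map Complex.ofReal :=
  Matrix.map_mul (f := Complex.ofRealHom)

/-- With `Ψ0 = Q * Σ * Zᵀ` a compact SVD, `K̂ = Σ⁻¹·Qᵀ·(Ψ1·Ψ0ᵀ)·Q·Σ⁻¹`
and `K̃ = Z·Σ⁻¹·Qᵀ·Ψ1`, every eigenpair `(λ, v)` of `K̃` with `λ ≠ 0` and `v ≠ 0`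
satisfies `Z·Zᵀ·v = v`, the vector `v̂ = Zᵀ·v` is nonzero, and `K̂·v̂ = λ·v̂`. Hence
every nonzero eigenvalue of `K̃` is an eigenvalue of `K̂`. -/
theorem kernel_dmd_eigenvalue_restrict
    (m M r : ℕ) (Psi0 Psi1 : Matrix (Fin m) (Fin M) ℝ)
    (Q : Matrix (Fin m) (Fin r) ℝ) (Z : Matrix (Fin M) (Fin r) ℝ)
    (S : Matrix (Fin r) (Fin r) ℝ)
    (hQ : Qᵀ * Q = 1) (hZ : Zᵀ * Z = 1) (hS : S.IsDiag) (hSinv : IsUnit S)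
    (hSVD : Psi0 = Q * S * Zᵀ)
    (Khat : Matrix (Fin r) (Fin r) ℝ)
    (hKhat : Khat = S⁻¹ * Qᵀ * (Psi1 * Psi0ᵀ) * Q * S⁻¹)
    (Ktilde : Matrix (Fin M) (Fin M) ℝ)
    (hKtilde : Ktilde = Z * S⁻¹ * Qᵀ * Psi1)
    (lam : ℂ) (hlam : lam ≠ 0) (v : Fin M → ℂ) (hv : v ≠ 0)
    (heig : (Ktilde.map (Complex.ofReal)) *ᵥ v = lam • v) :
    ((Z * Zᵀ).map (Complex.ofReal)) *ᵥ v = v ∧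
      (Zᵀ.map (Complex.ofReal)) *ᵥ v ≠ 0 ∧
      (Khat.map (Complex.ofReal)) *ᵥ ((Zᵀ.map (Complex.ofReal)) *ᵥ v)
        = lam • ((Zᵀ.map (Complex.ofReal)) *ᵥ v) := by
  have hSsym : Sᵀ = S := hS.isSymm
  have hdet : IsUnit S.det := (Matrix.isUnit_iff_isUnit_det S).mp hSinv
  have hSS : S * S⁻¹ = 1 := Matrix.mul_nonsing_inv S hdet
  set A := S⁻¹ * Qᵀ * Psi1 with hA
  have hKt : Ktilde = Z * A := by
    rw [hKtilde, hA]; simp [Matrix.mul_assoc]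
  have hKh : Khat = A * Z := by
    rw [hKhat, hSVD, hA]
    rw [Matrix.transpose_mul, Matrix.transpose_mul, Matrix.transpose_transpose, hSsym]
    simp only [Matrix.mul_assoc]
    rw [← Matrix.mul_assoc Qᵀ Q S⁻¹, hQ, Matrix.one_mul, hSS, Matrix.mul_one]
  set Zc := Z.map Complex.ofReal with hZc
  set Ac := A.map Complex.ofReal with hAc
  set w := Ac *ᵥ v with hw
  have heig' : Zc *ᵥ w = lam • v := by
    rw [hw, Matrix.mulVec_mulVec, ← kdmd_map_mul, ← hKt, heig]
  have hZZ : (Zᵀ * Z).map Complex.ofReal = 1 := by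
    rw [hZ]; ext i j; by_cases h : i = j <;> simp [Matrix.map_apply, Matrix.one_apply, h]
  have hvhat : (Zᵀ.map Complex.ofReal) *ᵥ v = lam⁻¹ • w := by
    have h1 : (Zᵀ.map Complex.ofReal) *ᵥ (lam • v) = lam • ((Zᵀ.map Complex.ofReal) *ᵥ v) :=
      Matrix.mulVec_smul _ _ _
    have h2 : (Zᵀ.map Complex.ofReal) *ᵥ (Zc *ᵥ w) = w := by
      rw [Matrix.mulVec_mulVec, hZc, ← kdmd_map_mul, hZZ, Matrix.one_mulVec]
    rw [heig'] at h2
    rw [h1] at h2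
    rw [← h2, smul_smul, inv_mul_cancel₀ hlam, one_smul]
  have goal1 : ((Z * Zᵀ).map Complex.ofReal) *ᵥ v = v := by
    rw [kdmd_map_mul, ← Matrix.mulVec_mulVec, hvhat, ← hZc,
      Matrix.mulVec_smul, heig', smul_smul, inv_mul_cancel₀ hlam, one_smul]
  refine ⟨goal1, ?_, ?_⟩
  · intro h0
    apply hv
    rw [← goal1, kdmd_map_mul, ← Matrix.mulVec_mulVec, h0, Matrix.mulVec_zero]
  · rw [hKh, hvhat, Matrix.mulVec_smul, kdmd_map_mul, ← hAc, ← hZc,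
      ← Matrix.mulVec_mulVec, heig', Matrix.mulVec_smul, ← hw,
      smul_smul, smul_smul, inv_mul_cancel₀ hlam, mul_inv_cancel₀ hlam]
end
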